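/- Van der Corput lemma (second-derivative case): let a < b be reals, φ : [a, b] → ℝ twice continuously differentiable with |φ''(σ)| ≥ μ > 0 on [a, b], and F : [a, b] → ℂ continuously differentiable. Then |∫_a^b F(σ) e^{iλφ(σ)} dσ| ≤ C λ^{−1/2} μ^{−1/2} ( |F(b)| + ∫_a^b |F'(σ)| dσ ) for all λ > 0, with an absolute constant C. -/

import Mathlib

open intervalIntegral

open intervalIntegral Set MeasureTheory Filter

namespace VdC

lemma ofReal_hdw {f : ℝ → ℝ} {u : ℝ} {s : Set ℝ} {x : ℝ} (hf : HasDerivWithinAt f u s x) :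
    HasDerivWithinAt (fun y => (f y : ℂ)) (u : ℂ) s x := by
  have h := (Complex.ofRealCLM.hasFDerivAt (x := f x)).comp_hasDerivWithinAt x hf
  simp at h; exact h

lemma norm_exp_eq_one (lam t : ℝ) : ‖Complex.exp (Complex.I * lam * t)‖ = 1 := by
  rw [Complex.norm_exp]
  norm_num [Complex.mul_re]

/-- First-derivative van der Corput estimate on an interval where `|g| ≥ ε`. -/
lemma good (c d : ℝ) (hcd : c ≤ d) (φ g g₂ : ℝ → ℝ) (lam ε : ℝ) (hlam : 0 < lam) (hε : 0 < ε)
    (hφ : ∀ x ∈ Icc c d, HasDerivWithinAt φ (g x) (Icc c d) x)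
    (hg : ∀ x ∈ Icc c d, HasDerivWithinAt g (g₂ x) (Icc c d) x)
    (hg₂c : ContinuousOn g₂ (Icc c d))
    (hg₂0 : ∀ x ∈ Icc c d, 0 ≤ g₂ x)
    (hgε : ∀ x ∈ Icc c d, ε ≤ |g x|) :
    ‖∫ σ in c..d, Complex.exp (Complex.I * lam * (φ σ : ℂ))‖ ≤ 4 / (lam * ε) := by
  have huIcc : uIcc c d = Icc c d := uIcc_of_le hcd
  have hgc : ContinuousOn g (Icc c d) := fun x hx => (hg x hx).continuousWithinAt
  have hgne : ∀ x ∈ Icc c d, g x ≠ 0 := by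
    intro x hx
    have := hgε x hx
    intro h; rw [h] at this; simp at this; linarith
  have hz : ∀ x ∈ Icc c d, (Complex.I * lam * (g x : ℂ)) ≠ 0 := by
    intro x hx
    simp [Complex.I_ne_zero, hlam.ne', hgne x hx]
  set v : ℝ → ℂ := fun x => Complex.exp (Complex.I * lam * (φ x : ℂ)) with hv_def
  set u : ℝ → ℂ := fun x => (Complex.I * lam * (g x : ℂ))⁻¹ with hu_def
  set u' : ℝ → ℂ := fun x => -(Complex.I * lam * (g₂ x : ℂ)) / (Complex.I * lam * (g x : ℂ)) ^ 2
    with hu'_def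
  set v' : ℝ → ℂ := fun x => Complex.exp (Complex.I * lam * (φ x : ℂ)) *
    (Complex.I * lam * (g x : ℂ)) with hv'_def
  have hu : ∀ x ∈ Icc c d, HasDerivWithinAt u (u' x) (Icc c d) x := by
    intro x hx
    have h1 : HasDerivWithinAt (fun y => Complex.I * (lam : ℂ) * ((g y : ℝ) : ℂ))
        (Complex.I * lam * (g₂ x : ℂ)) (Icc c d) x := (ofReal_hdw (hg x hx)).const_mul _
    have h2 := (hasDerivAt_inv (hz x hx)).comp_hasDerivWithinAt x h1
    have e : u' x = -((Complex.I * lam * (g x : ℂ)) ^ 2)⁻¹ * (Complex.I * lam * (g₂ x : ℂ)) := by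
      show -(Complex.I * lam * (g₂ x : ℂ)) / (Complex.I * lam * (g x : ℂ)) ^ 2 = _
      ring
    rw [e]; exact h2
  have hv : ∀ x ∈ Icc c d, HasDerivWithinAt v (v' x) (Icc c d) x := by
    intro x hx
    exact ((ofReal_hdw (hφ x hx)).const_mul (Complex.I * lam)).cexp
  have hgcC : ContinuousOn (fun x => (Complex.I * lam * (g x : ℂ))) (Icc c d) :=
    (Complex.continuous_ofReal.comp_continuousOn hgc).const_smul (Complex.I * lam) |>.congr
      (fun x _ => by simp [smul_eq_mul])
  have hg₂cC : ContinuousOn (fun x => (Complex.I * lam * (g₂ x : ℂ))) (Icc c d) :=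
    (Complex.continuous_ofReal.comp_continuousOn hg₂c).const_smul (Complex.I * lam) |>.congr
      (fun x _ => by simp [smul_eq_mul])
  have hu'c : ContinuousOn u' (Icc c d) := by
    apply (hg₂cC.neg).div (hgcC.pow 2)
    intro x hx
    exact pow_ne_zero _ (hz x hx)
  have hv'c : ContinuousOn v' (Icc c d) := by
    apply ContinuousOn.mul _ hgcC
    exact Complex.continuous_exp.comp_continuousOn
      ((Complex.continuous_ofReal.comp_continuousOn
        (fun x hx => (hφ x hx).continuousWithinAt)).const_smul (Complex.I * lam) |>.congr
        (fun x _ => by simp [smul_eq_mul]))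
  have hu'i : IntervalIntegrable u' volume c d := (huIcc ▸ hu'c).intervalIntegrable
  have hv'i : IntervalIntegrable v' volume c d := (huIcc ▸ hv'c).intervalIntegrable
  have hparts := integral_mul_deriv_eq_deriv_mul_of_hasDerivWithinAt
    (huIcc ▸ hu) (huIcc ▸ hv) hu'i hv'i
  have hmain : (∫ x in c..d, v x) = u d * v d - u c * v c - ∫ x in c..d, u' x * v x := by
    rw [← hparts]
    apply integral_congr
    intro x hx
    rw [huIcc] at hx
    simp only [hu_def, hv'_def]
    rw [mul_comm (Complex.exp _) _, ← mul_assoc, inv_mul_cancel₀ (hz x hx), one_mul]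
  have hnv : ∀ x, ‖v x‖ = 1 := fun x => norm_exp_eq_one lam (φ x)
  have hnu : ∀ x ∈ Icc c d, ‖u x‖ ≤ (lam * ε)⁻¹ := by
    intro x hx
    have h1 : ‖u x‖ = (lam * |g x|)⁻¹ := by
      simp [hu_def, abs_of_pos hlam, Complex.norm_def, map_mul]
    rw [h1]
    apply inv_anti₀ (by positivity)
    exact mul_le_mul_of_nonneg_left (hgε x hx) hlam.le
  -- the integral of ‖u'‖
  have hw : ∀ x ∈ Icc c d, HasDerivWithinAt (fun y => -(g y)⁻¹) (g₂ x / g x ^ 2) (Icc c d) x := by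
    intro x hx
    have := ((hg x hx).inv (hgne x hx)).neg
    simp [neg_div] at this; exact this
  have hwint : (∫ x in c..d, g₂ x / g x ^ 2) = (g c)⁻¹ - (g d)⁻¹ := by
    have := integral_eq_sub_of_hasDeriv_right_of_le hcd
      (f := fun y => -(g y)⁻¹) (f' := fun x => g₂ x / g x ^ 2)
      (ContinuousOn.neg (hgc.inv₀ hgne))
      (fun x hx => (((hw x (Ioo_subset_Icc_self hx)).hasDerivAt
        (Icc_mem_nhds hx.1 hx.2)).hasDerivWithinAt))
      ((huIcc ▸ ((hg₂c.div (hgc.pow 2)) (fun x hx => pow_ne_zero _ (hgne x hx)))).intervalIntegrable)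
    rw [this]; ring
  have hnu' : ∀ x ∈ Icc c d, ‖u' x * v x‖ = lam⁻¹ * (g₂ x / g x ^ 2) := by
    intro x hx
    rw [norm_mul, hnv, mul_one]
    have : ‖u' x‖ = (lam * g₂ x) / (lam * |g x|) ^ 2 := by
      simp [hu'_def, abs_of_pos hlam, abs_of_nonneg (hg₂0 x hx), Complex.norm_def, map_mul,
        map_pow, mul_pow]
    rw [this]
    rw [mul_pow, sq_abs]
    field_simp [hlam.ne', hgne x hx]
  have hIu' : ‖∫ x in c..d, u' x * v x‖ ≤ 2 / (lam * ε) := by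
    have h1 : ‖∫ x in c..d, u' x * v x‖ ≤ ∫ x in c..d, ‖u' x * v x‖ :=
      norm_integral_le_integral_norm hcd
    have h2 : (∫ x in c..d, ‖u' x * v x‖) = lam⁻¹ * ((g c)⁻¹ - (g d)⁻¹) := by
      rw [integral_congr (g := fun x => lam⁻¹ * (g₂ x / g x ^ 2)) (huIcc ▸ hnu'),
        intervalIntegral.integral_const_mul, hwint]
    have h3 : (g c)⁻¹ - (g d)⁻¹ ≤ 2 / ε := by
      have hc' : |(g c)⁻¹| ≤ ε⁻¹ := by
        rw [abs_inv]
        exact inv_anti₀ hε (hgε c ⟨le_rfl, hcd⟩)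
      have hd' : |(g d)⁻¹| ≤ ε⁻¹ := by
        rw [abs_inv]
        exact inv_anti₀ hε (hgε d ⟨hcd, le_rfl⟩)
      have := abs_sub ((g c)⁻¹) ((g d)⁻¹)
      have h4 : (g c)⁻¹ - (g d)⁻¹ ≤ |(g c)⁻¹| + |(g d)⁻¹| := by
        calc (g c)⁻¹ - (g d)⁻¹ ≤ |(g c)⁻¹ - (g d)⁻¹| := le_abs_self _
        _ ≤ |(g c)⁻¹| + |(g d)⁻¹| := abs_sub _ _
      calc (g c)⁻¹ - (g d)⁻¹ ≤ ε⁻¹ + ε⁻¹ := by linarith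
      _ = 2 / ε := by rw [div_eq_mul_inv]; ring
    calc ‖∫ x in c..d, u' x * v x‖ ≤ lam⁻¹ * ((g c)⁻¹ - (g d)⁻¹) := h1.trans_eq h2
    _ ≤ lam⁻¹ * (2 / ε) := by
        apply mul_le_mul_of_nonneg_left h3 (by positivity)
    _ = 2 / (lam * ε) := by field_simp
  rw [hmain]
  have hbd : ‖u d * v d - u c * v c - ∫ x in c..d, u' x * v x‖ ≤
      ‖u d * v d‖ + ‖u c * v c‖ + ‖∫ x in c..d, u' x * v x‖ := by
    calc ‖u d * v d - u c * v c - ∫ x in c..d, u' x * v x‖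
        ≤ ‖u d * v d - u c * v c‖ + ‖∫ x in c..d, u' x * v x‖ := norm_sub_le _ _
    _ ≤ ‖u d * v d‖ + ‖u c * v c‖ + ‖∫ x in c..d, u' x * v x‖ := by
        have := norm_sub_le (u d * v d) (u c * v c); linarith
  have h5 : ‖u d * v d‖ ≤ (lam * ε)⁻¹ := by
    rw [norm_mul, hnv, mul_one]; exact hnu d ⟨hcd, le_rfl⟩
  have h6 : ‖u c * v c‖ ≤ (lam * ε)⁻¹ := by
    rw [norm_mul, hnv, mul_one]; exact hnu c ⟨le_rfl, hcd⟩
  have : (lam * ε)⁻¹ + (lam * ε)⁻¹ + 2 / (lam * ε) = 4 / (lam * ε) := by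
    rw [div_eq_mul_inv, div_eq_mul_inv]; ring
  linarith [hbd, hIu']


/-- Second-derivative van der Corput, positive second derivative case. -/
lemma core_pos (a b : ℝ) (hab : a ≤ b) (φ g g₂ : ℝ → ℝ) (lam μ : ℝ) (hlam : 0 < lam) (hμ : 0 < μ)
    (hφ : ∀ x ∈ Icc a b, HasDerivWithinAt φ (g x) (Icc a b) x)
    (hg : ∀ x ∈ Icc a b, HasDerivWithinAt g (g₂ x) (Icc a b) x)
    (hg₂c : ContinuousOn g₂ (Icc a b))
    (hg₂ : ∀ x ∈ Icc a b, μ ≤ g₂ x) :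
    ‖∫ σ in a..b, Complex.exp (Complex.I * lam * (φ σ : ℂ))‖ ≤
      10 * (lam ^ (-(1/2) : ℝ) * μ ^ (-(1/2) : ℝ)) := by
  set δ : ℝ := lam ^ (-(1/2) : ℝ) * μ ^ (-(1/2) : ℝ) with hδ_def
  have hδ : 0 < δ := mul_pos (Real.rpow_pos_of_pos hlam _) (Real.rpow_pos_of_pos hμ _)
  have hkey : lam * (μ * δ) = δ⁻¹ := by
    have hh1 : lam ^ ((1/2 : ℝ)) * lam ^ ((1/2 : ℝ)) = lam := by
      rw [← Real.rpow_add hlam]; norm_num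
    have hh2 : μ ^ ((1/2 : ℝ)) * μ ^ ((1/2 : ℝ)) = μ := by
      rw [← Real.rpow_add hμ]; norm_num
    have e1 : lam * lam ^ (-(1/2) : ℝ) = lam ^ ((1/2 : ℝ)) := by
      rw [Real.rpow_neg hlam.le]
      nth_rewrite 1 [← hh1]
      have : lam ^ ((1/2 : ℝ)) ≠ 0 := (Real.rpow_pos_of_pos hlam _).ne'
      field_simp
    have e2 : μ * μ ^ (-(1/2) : ℝ) = μ ^ ((1/2 : ℝ)) := by
      rw [Real.rpow_neg hμ.le]
      nth_rewrite 1 [← hh2]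
      have : μ ^ ((1/2 : ℝ)) ≠ 0 := (Real.rpow_pos_of_pos hμ _).ne'
      field_simp
    have e3 : δ⁻¹ = lam ^ ((1/2 : ℝ)) * μ ^ ((1/2 : ℝ)) := by
      rw [hδ_def, mul_inv, ← Real.rpow_neg hlam.le, ← Real.rpow_neg hμ.le]
      norm_num
    rw [e3, ← e1, ← e2, hδ_def]
    ring
  set ε : ℝ := μ * δ with hε_def
  have hε : 0 < ε := mul_pos hμ hδ
  have hgc : ContinuousOn g (Icc a b) := fun x hx => (hg x hx).continuousWithinAt
  have hmono : MonotoneOn g (Icc a b) := by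
    apply monotoneOn_of_hasDerivWithinAt_nonneg (convex_Icc a b) hgc
    · intro x hx
      exact (hg x (interior_subset hx)).mono interior_subset
    · intro x hx
      exact hμ.le.trans (hg₂ x (interior_subset hx))
  have hmono2 : MonotoneOn (fun x => g x - μ * x) (Icc a b) := by
    apply monotoneOn_of_hasDerivWithinAt_nonneg (convex_Icc a b)
      (f' := fun x => g₂ x - μ)
      (hgc.sub ((continuous_const.mul continuous_id).continuousOn))
    · intro x hx
      have hlin : HasDerivWithinAt (fun y : ℝ => μ * y) μ (Icc a b) x := by
        simpa using ((hasDerivAt_id x).const_mul μ).hasDerivWithinAt (s := Icc a b)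
      exact ((hg x (interior_subset hx)).sub hlin).mono interior_subset
    · intro x hx
      have := hg₂ x (interior_subset hx); linarith
  set S : Set ℝ := insert a {x ∈ Icc a b | g x ≤ -ε} with hS_def
  set T : Set ℝ := insert b {x ∈ Icc a b | ε ≤ g x} with hT_def
  have hSclosed : IsClosed S := by
    rw [hS_def, insert_eq]
    apply IsClosed.union isClosed_singleton
    have : {x ∈ Icc a b | g x ≤ -ε} = Icc a b ∩ {x | g x ≤ -ε} := by ext x; simp [and_comm]
    rw [this]
    exact ContinuousOn.preimage_isClosed_of_isClosed hgc isClosed_Icc isClosed_Iic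
  have hTclosed : IsClosed T := by
    rw [hT_def, insert_eq]
    apply IsClosed.union isClosed_singleton
    have : {x ∈ Icc a b | ε ≤ g x} = Icc a b ∩ {x | ε ≤ g x} := by ext x; simp [and_comm]
    rw [this]
    exact ContinuousOn.preimage_isClosed_of_isClosed hgc isClosed_Icc isClosed_Ici
  have hSne : S.Nonempty := ⟨a, mem_insert _ _⟩
  have hTne : T.Nonempty := ⟨b, mem_insert _ _⟩
  have hSbdd : BddAbove S := by
    refine ⟨b, ?_⟩
    intro x hx
    rcases mem_insert_iff.1 hx with rfl | hx
    · exact hab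
    · exact hx.1.2
  have hTbdd : BddBelow T := by
    refine ⟨a, ?_⟩
    intro x hx
    rcases mem_insert_iff.1 hx with rfl | hx
    · exact hab
    · exact hx.1.1
  obtain ⟨c, hc_def⟩ : ∃ c : ℝ, c = sSup S := ⟨_, rfl⟩
  obtain ⟨d, hd_def⟩ : ∃ d : ℝ, d = sInf T := ⟨_, rfl⟩
  have hcS : c ∈ S := hc_def ▸ hSclosed.csSup_mem hSne hSbdd
  have hdT : d ∈ T := hd_def ▸ hTclosed.csInf_mem hTne hTbdd
  have hcIcc : c ∈ Icc a b := by
    constructor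
    · exact hc_def ▸ le_csSup hSbdd (mem_insert _ _)
    · rcases mem_insert_iff.1 hcS with rfl | h
      · exact hab
      · exact h.1.2
  have hdIcc : d ∈ Icc a b := by
    constructor
    · rcases mem_insert_iff.1 hdT with rfl | h
      · exact hab
      · exact h.1.1
    · exact hd_def ▸ csInf_le hTbdd (mem_insert _ _)
  have hcd : c ≤ d := by
    by_contra hlt
    push_neg at hlt
    have hca : a < c := lt_of_le_of_lt hdIcc.1 hlt
    have hdb : d < b := lt_of_lt_of_le hlt hcIcc.2
    have hgc' : g c ≤ -ε := by
      rcases mem_insert_iff.1 hcS with h | h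
      · exact absurd h hca.ne'
      · exact h.2
    have hgd' : ε ≤ g d := by
      rcases mem_insert_iff.1 hdT with h | h
      · exact absurd h hdb.ne
      · exact h.2
    have := hmono hdIcc hcIcc hlt.le
    linarith
  -- interior points of (c, d) have |g| < ε
  have hmid : ∀ x ∈ Ioo c d, -ε < g x ∧ g x < ε := by
    intro x hx
    constructor
    · by_contra h
      push_neg at h
      have hxS : x ∈ S := by
        refine mem_insert_of_mem _ ⟨⟨hcIcc.1.trans hx.1.le, hx.2.le.trans hdIcc.2⟩, h⟩
      exact absurd (hc_def ▸ le_csSup hSbdd hxS) (not_le.2 hx.1)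
    · by_contra h
      push_neg at h
      have hxT : x ∈ T := by
        refine mem_insert_of_mem _ ⟨⟨hcIcc.1.trans hx.1.le, hx.2.le.trans hdIcc.2⟩, h⟩
      exact absurd (hd_def ▸ csInf_le hTbdd hxT) (not_le.2 hx.2)
  have hdc2δ : d - c ≤ 2 * δ := by
    refine le_of_forall_pos_le_add ?_
    intro η hη
    rcases le_or_gt (d - c) (2 * δ) with h | h
    · linarith
    have hcd' : c < d := by nlinarith
    set t : ℝ := min (η / 2) ((d - c) / 2) with ht_def
    have ht : 0 < t := lt_min (by linarith) (by linarith)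
    have ht2 : 2 * t ≤ d - c := by
      have := min_le_right (η / 2) ((d - c) / 2)
      rw [← ht_def] at this; linarith
    set x : ℝ := c + t with hx_def
    set y : ℝ := d - t with hy_def
    have hxy : x ≤ y := by rw [hx_def, hy_def]; linarith
    have hxIoo : x ∈ Ioo c d := ⟨by linarith, by linarith⟩
    have hyIoo : y ∈ Ioo c d := ⟨by linarith, by linarith⟩
    have hxIcc : x ∈ Icc a b := ⟨hcIcc.1.trans hxIoo.1.le, hxIoo.2.le.trans hdIcc.2⟩
    have hyIcc : y ∈ Icc a b := ⟨hcIcc.1.trans hyIoo.1.le, hyIoo.2.le.trans hdIcc.2⟩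
    have h1 := hmono2 hxIcc hyIcc hxy
    simp only at h1
    have h2 := (hmid x hxIoo).1
    have h3 := (hmid y hyIoo).2
    have h4 : μ * (y - x) ≤ g y - g x := by linarith
    have h5 : g y - g x < 2 * ε := by linarith
    have h6 : y - x < 2 * δ := by
      rw [hε_def] at h5
      nlinarith
    have ht' : t ≤ η / 2 := min_le_left _ _
    rw [hx_def, hy_def] at h6
    linarith
  -- continuity of the integrand
  have hφc : ContinuousOn φ (Icc a b) := fun x hx => (hφ x hx).continuousWithinAt
  have hvc : ContinuousOn (fun σ => Complex.exp (Complex.I * lam * (φ σ : ℂ))) (Icc a b) := by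
    apply Complex.continuous_exp.comp_continuousOn
    exact ((Complex.continuous_ofReal.comp_continuousOn hφc).const_smul
      (Complex.I * lam)).congr (fun x _ => by simp [smul_eq_mul])
  have hint : ∀ p q : ℝ, p ∈ Icc a b → q ∈ Icc a b →
      IntervalIntegrable (fun σ => Complex.exp (Complex.I * lam * (φ σ : ℂ))) volume p q := by
    intro p q hp hq
    exact (hvc.mono (uIcc_subset_Icc hp hq)).intervalIntegrable
  -- piece estimates
  have hfrac : 4 / (lam * ε) = 4 * δ := by
    rw [hε_def, hkey, div_eq_mul_inv, inv_inv]
  have piece1 : ‖∫ σ in a..c, Complex.exp (Complex.I * lam * (φ σ : ℂ))‖ ≤ 4 * δ := by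
    rcases eq_or_lt_of_le hcIcc.1 with h | h
    · rw [← h, integral_same]; simp; positivity
    · have hsub : Icc a c ⊆ Icc a b := Icc_subset_Icc le_rfl hcIcc.2
      have hgc' : g c ≤ -ε := by
        rcases mem_insert_iff.1 hcS with h' | h'
        · exact absurd h'.symm h.ne
        · exact h'.2
      rw [← hfrac]
      apply good a c hcIcc.1 φ g g₂ lam ε hlam hε
      · intro x hx; exact (hφ x (hsub hx)).mono hsub
      · intro x hx; exact (hg x (hsub hx)).mono hsub
      · exact hg₂c.mono hsub
      · intro x hx; exact hμ.le.trans (hg₂ x (hsub hx))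
      · intro x hx
        have : g x ≤ -ε := le_trans (hmono (hsub hx) hcIcc hx.2) hgc'
        rw [abs_of_nonpos (by linarith)]
        linarith
  have piece3 : ‖∫ σ in d..b, Complex.exp (Complex.I * lam * (φ σ : ℂ))‖ ≤ 4 * δ := by
    rcases eq_or_lt_of_le hdIcc.2 with h | h
    · rw [h, integral_same]; simp; positivity
    · have hsub : Icc d b ⊆ Icc a b := Icc_subset_Icc hdIcc.1 le_rfl
      have hgd' : ε ≤ g d := by
        rcases mem_insert_iff.1 hdT with h' | h'
        · exact absurd h' h.ne
        · exact h'.2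
      rw [← hfrac]
      apply good d b hdIcc.2 φ g g₂ lam ε hlam hε
      · intro x hx; exact (hφ x (hsub hx)).mono hsub
      · intro x hx; exact (hg x (hsub hx)).mono hsub
      · exact hg₂c.mono hsub
      · intro x hx; exact hμ.le.trans (hg₂ x (hsub hx))
      · intro x hx
        have : ε ≤ g x := le_trans hgd' (hmono hdIcc (hsub hx) hx.1)
        rw [abs_of_nonneg (by linarith)]
        exact this
  have piece2 : ‖∫ σ in c..d, Complex.exp (Complex.I * lam * (φ σ : ℂ))‖ ≤ 2 * δ := by
    have h1 : ‖∫ σ in c..d, Complex.exp (Complex.I * lam * (φ σ : ℂ))‖ ≤ 1 * |d - c| := by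
      apply intervalIntegral.norm_integral_le_of_norm_le_const
      intro x _
      rw [norm_exp_eq_one]
    rw [abs_of_nonneg (by linarith)] at h1
    linarith
  have hsplit : (∫ σ in a..b, Complex.exp (Complex.I * lam * (φ σ : ℂ))) =
      (∫ σ in a..c, Complex.exp (Complex.I * lam * (φ σ : ℂ))) +
      (∫ σ in c..d, Complex.exp (Complex.I * lam * (φ σ : ℂ))) +
      (∫ σ in d..b, Complex.exp (Complex.I * lam * (φ σ : ℂ))) := by
    rw [integral_add_adjacent_intervals (hint a c (left_mem_Icc.2 hab) hcIcc)
      (hint c d hcIcc hdIcc),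
      integral_add_adjacent_intervals (hint a d (left_mem_Icc.2 hab) hdIcc)
      (hint d b hdIcc (right_mem_Icc.2 hab))]
  rw [hsplit]
  calc ‖_ + _ + _‖ ≤ 4 * δ + 2 * δ + 4 * δ := by
        refine le_trans (norm_add₃_le) ?_
        gcongr
  _ = 10 * δ := by ring


/-- Second-derivative van der Corput, `|g₂| ≥ μ` case. -/
lemma core (a b : ℝ) (hab : a ≤ b) (φ g g₂ : ℝ → ℝ) (lam μ : ℝ) (hlam : 0 < lam) (hμ : 0 < μ)
    (hφ : ∀ x ∈ Icc a b, HasDerivWithinAt φ (g x) (Icc a b) x)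
    (hg : ∀ x ∈ Icc a b, HasDerivWithinAt g (g₂ x) (Icc a b) x)
    (hg₂c : ContinuousOn g₂ (Icc a b))
    (hg₂ : ∀ x ∈ Icc a b, μ ≤ |g₂ x|) :
    ‖∫ σ in a..b, Complex.exp (Complex.I * lam * (φ σ : ℂ))‖ ≤
      10 * (lam ^ (-(1/2) : ℝ) * μ ^ (-(1/2) : ℝ)) := by
  have hne : ∀ x ∈ Icc a b, g₂ x ≠ 0 := by
    intro x hx h
    have := hg₂ x hx; rw [h] at this; simp at this; linarith
  by_cases hpos : ∀ x ∈ Icc a b, 0 < g₂ x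
  · exact core_pos a b hab φ g g₂ lam μ hlam hμ hφ hg hg₂c
      (fun x hx => by have h1 := hg₂ x hx; rwa [abs_of_pos (hpos x hx)] at h1)
  · push_neg at hpos
    obtain ⟨x₀, hx₀, hx₀le⟩ := hpos
    have hneg : ∀ x ∈ Icc a b, g₂ x < 0 := by
      intro y hy
      rcases lt_or_ge (g₂ y) 0 with h | h
      · exact h
      exfalso
      have hy0 : 0 < g₂ y := lt_of_le_of_ne h (Ne.symm (hne y hy))
      have hx0 : g₂ x₀ < 0 := lt_of_le_of_ne hx₀le (hne x₀ hx₀)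
      have hsub : uIcc x₀ y ⊆ Icc a b := uIcc_subset_Icc hx₀ hy
      obtain ⟨z, hz, hz0⟩ := intermediate_value_uIcc (hg₂c.mono hsub)
        (show (0:ℝ) ∈ uIcc (g₂ x₀) (g₂ y) by
          rw [Set.mem_uIcc]; left; exact ⟨hx0.le, hy0.le⟩)
      exact hne z (hsub hz) hz0
    have h1 := core_pos a b hab (fun x => -φ x) (fun x => -g x) (fun x => -g₂ x) lam μ hlam hμ
      (fun x hx => (hφ x hx).neg) (fun x hx => (hg x hx).neg) hg₂c.neg
      (fun x hx => by have h2 := hg₂ x hx; rw [abs_of_neg (hneg x hx)] at h2; simpa using h2)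
    have hptwise : ∀ σ : ℝ, Complex.exp (Complex.I * lam * ((-φ σ : ℝ) : ℂ)) =
        (starRingEnd ℂ) (Complex.exp (Complex.I * lam * ((φ σ : ℝ) : ℂ))) := by
      intro σ
      rw [← Complex.exp_conj]
      congr 1
      simp only [map_mul, Complex.conj_I, Complex.conj_ofReal]
      push_cast
      ring
    have hconj : (∫ σ in a..b, Complex.exp (Complex.I * lam * ((-φ σ : ℝ) : ℂ))) =
        (starRingEnd ℂ) (∫ σ in a..b, Complex.exp (Complex.I * lam * ((φ σ : ℝ) : ℂ))) := by
      simp_rw [hptwise]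
      rw [intervalIntegral.integral_of_le hab, intervalIntegral.integral_of_le hab,
        ← integral_conj]
    rw [hconj, RCLike.norm_conj] at h1
    exact h1

end VdC

open VdC

open Set MeasureTheory intervalIntegral


set_option maxHeartbeats 1000000

/-- Van der Corput lemma (second-derivative case): if `|φ''| ≥ μ > 0` on `[a,b]`
and `F` is `C¹` on `[a,b]`, then for every `λ > 0`,
`|∫_a^b F(σ) e^{iλφ(σ)} dσ| ≤ C λ^{−1/2} μ^{−1/2} (|F(b)| + ∫_a^b |F'(σ)| dσ)`
with an absolute constant `C`. -/
theorem stmt_10 :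
    ∃ C : ℝ, 0 < C ∧
      ∀ (a b : ℝ), a < b → ∀ (φ : ℝ → ℝ) (F : ℝ → ℂ) (μ lam : ℝ), 0 < μ → 0 < lam →
        ContDiffOn ℝ 2 φ (Set.Icc a b) →
        (∀ σ ∈ Set.Icc a b, μ ≤ |deriv (deriv φ) σ|) →
        ContDiffOn ℝ 1 F (Set.Icc a b) →
        ‖∫ σ in a..b, F σ * Complex.exp (Complex.I * lam * (φ σ : ℂ))‖ ≤
          C * lam ^ (-(1/2) : ℝ) * μ ^ (-(1/2) : ℝ) *
            (‖F b‖ + ∫ σ in a..b, ‖deriv F σ‖) := by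
  refine ⟨10, by norm_num, ?_⟩
  intro a b hab φ F μ lam hμ hlam hφ2 hφ'' hF1
  have hs : UniqueDiffOn ℝ (Icc a b) := uniqueDiffOn_Icc hab
  set g : ℝ → ℝ := derivWithin φ (Icc a b) with hg_def
  set g₂ : ℝ → ℝ := derivWithin g (Icc a b) with hg₂_def
  have hφd : ∀ x ∈ Icc a b, HasDerivWithinAt φ (g x) (Icc a b) x := by
    intro x hx
    exact ((hφ2.differentiableOn (by norm_num)) x hx).hasDerivWithinAt
  have hgC1 : ContDiffOn ℝ 1 g (Icc a b) := hφ2.derivWithin hs (by norm_num)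
  have hgd : ∀ x ∈ Icc a b, HasDerivWithinAt g (g₂ x) (Icc a b) x := by
    intro x hx
    exact ((hgC1.differentiableOn (by norm_num)) x hx).hasDerivWithinAt
  have hg₂cont : ContinuousOn g₂ (Icc a b) :=
    (show ContDiffOn ℝ 0 g₂ (Icc a b) from hgC1.derivWithin hs (by norm_num)).continuousOn
  -- on the interior, `g₂` agrees with the true second derivative
  have hioo : ∀ x ∈ Ioo a b, deriv (deriv φ) x = g₂ x := by
    intro x hx
    have hevq : deriv φ =ᶠ[nhds x] g := by
      filter_upwards [Ioo_mem_nhds hx.1 hx.2] with y hy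
      exact ((hφd y (Ioo_subset_Icc_self hy)).hasDerivAt
        (Icc_mem_nhds hy.1 hy.2)).deriv
    rw [hevq.deriv_eq]
    exact ((hgd x (Ioo_subset_Icc_self hx)).hasDerivAt (Icc_mem_nhds hx.1 hx.2)).deriv
  have habs : ∀ x ∈ Icc a b, μ ≤ |g₂ x| := by
    intro x hx
    have hclos : x ∈ closure (Ioo a b) := by
      rw [closure_Ioo hab.ne]; exact hx
    have hne : (nhdsWithin x (Ioo a b)).NeBot := mem_closure_iff_nhdsWithin_neBot.1 hclos
    have htend : Filter.Tendsto (fun y => |g₂ y|) (nhdsWithin x (Ioo a b)) (nhds |g₂ x|) := by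
      apply Filter.Tendsto.comp (continuous_abs.tendsto _)
      exact ((hg₂cont x hx).mono Ioo_subset_Icc_self).tendsto
    refine ge_of_tendsto htend ?_
    filter_upwards [self_mem_nhdsWithin] with y hy
    rw [← hioo y hy]
    exact hφ'' y (Ioo_subset_Icc_self hy)
  -- the antiderivative of the oscillatory factor
  set v : ℝ → ℂ := fun σ => Complex.exp (Complex.I * lam * (φ σ : ℂ)) with hv_def
  have hφc : ContinuousOn φ (Icc a b) := hφ2.continuousOn
  have hvc : ContinuousOn v (Icc a b) := by
    apply Complex.continuous_exp.comp_continuousOn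
    exact ((Complex.continuous_ofReal.comp_continuousOn hφc).const_smul
      (Complex.I * lam)).congr (fun x _ => by simp [smul_eq_mul])
  set G : ℝ → ℂ := fun x => ∫ σ in a..x, v σ with hG_def
  have hvint : ∀ x ∈ Icc a b, IntervalIntegrable v volume a x := by
    intro x hx
    exact (hvc.mono (uIcc_subset_Icc (left_mem_Icc.2 hab.le) hx)).intervalIntegrable
  set K : ℝ := 10 * (lam ^ (-(1/2) : ℝ) * μ ^ (-(1/2) : ℝ)) with hK_def
  have hK : 0 ≤ K := by positivity
  have hGbound : ∀ x ∈ Icc a b, ‖G x‖ ≤ K := by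
    intro x hx
    have hsub : Icc a x ⊆ Icc a b := Icc_subset_Icc le_rfl hx.2
    exact core a x hx.1 φ g g₂ lam μ hlam hμ
      (fun y hy => (hφd y (hsub hy)).mono hsub)
      (fun y hy => (hgd y (hsub hy)).mono hsub)
      (hg₂cont.mono hsub)
      (fun y hy => habs y (hsub hy))
  -- derivative of G within the interval
  have hGd : ∀ x ∈ Icc a b, HasDerivWithinAt G (v x) (Icc a b) x := by
    intro x hx
    haveI : Fact (x ∈ Icc a b) := ⟨hx⟩
    have hmeas : StronglyMeasurableAtFilter v (nhdsWithin x (Icc a b)) volume :=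
      ⟨Icc a b, self_mem_nhdsWithin, hvc.aestronglyMeasurable measurableSet_Icc⟩
    exact integral_hasDerivWithinAt_right (hvint x hx) hmeas (hvc x hx)
  -- integration by parts
  set F' : ℝ → ℂ := derivWithin F (Icc a b) with hF'_def
  have hFd : ∀ x ∈ Icc a b, HasDerivWithinAt F (F' x) (Icc a b) x := by
    intro x hx
    exact ((hF1.differentiableOn (by norm_num)) x hx).hasDerivWithinAt
  have hF'c : ContinuousOn F' (Icc a b) :=
    (show ContDiffOn ℝ 0 F' (Icc a b) from hF1.derivWithin hs (by norm_num)).continuousOn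
  have huIcc : uIcc a b = Icc a b := uIcc_of_le hab.le
  have hF'i : IntervalIntegrable F' volume a b := (huIcc ▸ hF'c).intervalIntegrable
  have hvi : IntervalIntegrable v volume a b := (huIcc ▸ hvc).intervalIntegrable
  have hparts := integral_mul_deriv_eq_deriv_mul_of_hasDerivWithinAt
    (u := F) (v := G) (u' := F') (v' := v)
    (huIcc ▸ hFd) (huIcc ▸ hGd) hF'i hvi
  have hGa : G a = 0 := integral_same
  rw [hGa, mul_zero, sub_zero] at hparts
  have hGc : ContinuousOn G (Icc a b) := fun x hx => (hGd x hx).continuousWithinAt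
  -- norm bound
  have hbound : ‖∫ x in a..b, F x * v x‖ ≤ ‖F b‖ * K + (∫ x in a..b, ‖F' x‖) * K := by
    rw [hparts]
    have h1 : ‖F b * G b - ∫ x in a..b, F' x * G x‖ ≤
        ‖F b * G b‖ + ‖∫ x in a..b, F' x * G x‖ := norm_sub_le _ _
    have h2 : ‖F b * G b‖ ≤ ‖F b‖ * K := by
      rw [norm_mul]
      exact mul_le_mul_of_nonneg_left (hGbound b (right_mem_Icc.2 hab.le)) (norm_nonneg _)
    have h3 : ‖∫ x in a..b, F' x * G x‖ ≤ (∫ x in a..b, ‖F' x‖) * K := by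
      have h4 : ‖∫ x in a..b, F' x * G x‖ ≤ ∫ x in a..b, ‖F' x * G x‖ :=
        norm_integral_le_integral_norm hab.le
      have h5 : (∫ x in a..b, ‖F' x * G x‖) ≤ ∫ x in a..b, ‖F' x‖ * K := by
        apply integral_mono_on hab.le
        · apply ContinuousOn.intervalIntegrable
          rw [huIcc]
          exact (hF'c.mul hGc).norm
        · apply ContinuousOn.intervalIntegrable
          rw [huIcc]
          exact hF'c.norm.mul continuousOn_const
        · intro x hx
          rw [norm_mul]
          exact mul_le_mul_of_nonneg_left (hGbound x hx) (norm_nonneg _)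
      rw [intervalIntegral.integral_mul_const] at h5
      linarith
    linarith
  -- replace the within-derivative by the true derivative in the integral
  have hcongr : (∫ σ in a..b, ‖deriv F σ‖) = ∫ σ in a..b, ‖F' σ‖ := by
    apply intervalIntegral.integral_congr_ae
    have hb' : ∀ᵐ x ∂(volume : Measure ℝ), x ≠ b := by
      refine (MeasureTheory.ae_iff).2 ?_
      simpa using Real.volume_singleton
    filter_upwards [hb'] with x hx hmem
    rw [uIoc_of_le hab.le] at hmem
    have hxIoo : x ∈ Ioo a b := ⟨hmem.1, lt_of_le_of_ne hmem.2 hx⟩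
    congr 1
    exact ((hFd x (Ioo_subset_Icc_self hxIoo)).hasDerivAt
      (Icc_mem_nhds hxIoo.1 hxIoo.2)).deriv
  rw [hcongr]
  calc ‖∫ σ in a..b, F σ * v σ‖ ≤ ‖F b‖ * K + (∫ x in a..b, ‖F' x‖) * K := hbound
  _ = 10 * lam ^ (-(1/2) : ℝ) * μ ^ (-(1/2) : ℝ) * (‖F b‖ + ∫ σ in a..b, ‖F' σ‖) := by
      rw [hK_def]; ring
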